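/- Let f : (ZMod 2)^n → ℝ be a Boolean function (f(x) ∈ {−1,1} for all x) with spectral norm ‖f̂‖₁ = A > 1. Then there exist γ ∈ (ZMod 2)^n with γ ≠ 0 and b ∈ {−1,1} such that (1/2)·∑_{β ∈ (ZMod 2)^n} |f̂(β) + b·f̂(β+γ)| ≤ A − 1/A; that is, the spectral norm of the restriction of f to the affine subspace {x : χ_γ(x) = b} is at most A − 1/A. -/

import Mathlib

/-!
Write `a = f̂`. Since `f² = 1`, Parseval gives `∑ a(β)² = 1` and the autocorrelation
`∑_β a(β) a(β + γ)` vanishes for `γ ≠ 0`. Let `α₁`, `α₂` carry the largest and second largest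
`|a|` and put `γ = α₁ + α₂`. In the autocorrelation at `γ` the pair `{α₁, α₂}` contributes
`2 a(α₁) a(α₂)`, while every other term is at most `|a(α₂)| · min (|a(β)|, |a(β + γ)|)`; hence
`∑_β min (|a(β)|, |a(β + γ)|) ≥ 2 |a(α₁)| ≥ 2 / A`, the last step because
`1 = ∑ a² ≤ |a(α₁)| A`. As `|u + v| + |u - v| = 2 (|u| + |v|) - 2 min (|u|, |v|)`, the spectral
norms of the two restrictions `b = ±1` add up to at most `2 A - 2 / A`.
-/

/-- The character `χ_α(x) = (-1)^{⟨α,x⟩}` on the Boolean cube `(ZMod 2)^n`. -/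
noncomputable def chi {n : ℕ} (α x : Fin n → ZMod 2) : ℝ :=
  if (∑ i, α i * x i : ZMod 2) = 0 then 1 else -1

/-- The Fourier coefficient `f̂(α) = 2^{-n} ∑_x f(x) χ_α(x)`. -/
noncomputable def fhat {n : ℕ} (f : (Fin n → ZMod 2) → ℝ) (α : Fin n → ZMod 2) : ℝ :=
  (2 ^ n : ℝ)⁻¹ * ∑ x : Fin n → ZMod 2, f x * chi α x

open Finset

lemma abs_add_add_abs_sub {α : Type*} [Field α] [LinearOrder α] [IsStrictOrderedRing α]
    (u v : α) : |u + v| + |u - v| = 2 * max |u| |v| := by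
  rcases abs_cases u with ⟨hu, _⟩ | ⟨hu, _⟩ <;> rcases abs_cases v with ⟨hv, _⟩ | ⟨hv, _⟩ <;>
    rcases abs_cases (u + v) with ⟨h, _⟩ | ⟨h, _⟩ <;>
    rcases abs_cases (u - v) with ⟨h', _⟩ | ⟨h', _⟩ <;>
    rcases max_cases |u| |v| with ⟨hm, _⟩ | ⟨hm, _⟩ <;> linarith

lemma abs_mul_le_mul_min {α : Type*} [Field α] [LinearOrder α] [IsStrictOrderedRing α]
    {u v c : α} (hu : |u| ≤ c) (hv : |v| ≤ c) : |u * v| ≤ c * min |u| |v| := by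
  rw [abs_mul, ← min_mul_max |u| |v|, mul_comm]
  exact mul_le_mul_of_nonneg_right (max_le hu hv) (le_min (abs_nonneg u) (abs_nonneg v))

section FiniteGroup

variable {G : Type*} [Fintype G]

lemma sum_sq_le_mul_sum_abs (a : G → ℝ) {M : ℝ} (hM : ∀ β, |a β| ≤ M) :
    ∑ β, a β ^ 2 ≤ M * ∑ β, |a β| := by
  rw [mul_sum]
  refine sum_le_sum fun β _ => ?_
  rw [← sq_abs, sq]
  exact mul_le_mul_of_nonneg_right (hM β) (abs_nonneg _)

lemma exists_ne_apply_ne_zero {a : G → ℝ} (hsq : ∑ β, a β ^ 2 = 1) (habs : 1 < ∑ β, |a β|)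
    (α : G) : ∃ β ≠ α, a β ≠ 0 := by
  by_contra! h
  have hsingle {g : ℝ → ℝ} (hg : g 0 = 0) : ∑ β, g (a β) = g (a α) :=
    sum_eq_single α (fun β _ hβ => by rw [h β hβ, hg]) (by simp)
  rw [hsingle (g := (· ^ 2)) (by simp)] at hsq
  rw [hsingle (g := abs) abs_zero] at habs
  nlinarith [sq_abs (a α), abs_nonneg (a α)]

variable [AddCommGroup G]

lemma sum_abs_add_add_sum_abs_sub (a : G → ℝ) (γ : G) :
    ∑ β, |a β + a (β + γ)| + ∑ β, |a β - a (β + γ)|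
      = 4 * ∑ β, |a β| - 2 * ∑ β, min |a β| |a (β + γ)| := by
  have hshift : ∑ β, |a (β + γ)| = ∑ β, |a β| := Equiv.sum_comp (Equiv.addRight γ) (|a ·|)
  calc ∑ β, |a β + a (β + γ)| + ∑ β, |a β - a (β + γ)|
      = ∑ β, (2 * (|a β| + |a (β + γ)|) - 2 * min |a β| |a (β + γ)|) := by
        rw [← sum_add_distrib]
        refine sum_congr rfl fun β _ => ?_
        rw [abs_add_add_abs_sub, ← min_add_max |a β|]
        ring
    _ = 4 * ∑ β, |a β| - 2 * ∑ β, min |a β| |a (β + γ)| := by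
        rw [sum_sub_distrib, ← mul_sum, ← mul_sum, sum_add_distrib, hshift]
        ring

variable [DecidableEq G]

lemma two_mul_abs_le_sum_min (hG : ∀ x : G, x + x = 0) {a : G → ℝ} {α₁ α₂ : G}
    (hne : α₁ ≠ α₂) (hcorr : ∑ β, a β * a (β + (α₁ + α₂)) = 0) (hpos : 0 < |a α₂|)
    (hle : ∀ β ≠ α₁, |a β| ≤ |a α₂|) :
    2 * |a α₁| ≤ ∑ β, min |a β| |a (β + (α₁ + α₂))| := by
  set γ := α₁ + α₂
  set M := |a α₂|
  have hshift {β δ : G} : β + γ = δ ↔ β = δ + γ := by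
    constructor <;> rintro rfl <;> rw [add_assoc, hG, add_zero]
  have hα₁ : α₁ + γ = α₂ := by rw [← add_assoc, hG, zero_add]
  have hα₂ : α₂ + γ = α₁ := hshift.2 hα₁.symm
  set S := univ \ {α₁, α₂}
  have hS : ∑ β ∈ S, a β * a (β + γ) = -(2 * (a α₁ * a α₂)) := by
    have hsplit := sum_sdiff (f := fun β => a β * a (β + γ)) (subset_univ {α₁, α₂})
    rw [sum_pair hne, hα₁, hα₂, hcorr] at hsplit
    linarith
  have hterm : ∀ β ∈ S, |a β * a (β + γ)| ≤ M * min |a β| |a (β + γ)| := by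
    intro β hβ
    simp only [S, mem_sdiff, mem_univ, mem_insert, mem_singleton, true_and, not_or] at hβ
    exact abs_mul_le_mul_min (hle β hβ.1) (hle _ fun h => hβ.2 (hα₁ ▸ hshift.1 h))
  have hmain : 2 * |a α₁| * M ≤ (∑ β, min |a β| |a (β + γ)|) * M := calc
    2 * |a α₁| * M = |∑ β ∈ S, a β * a (β + γ)| := by
      rw [hS, abs_neg, abs_mul, abs_mul, abs_two, mul_assoc]
    _ ≤ ∑ β ∈ S, M * min |a β| |a (β + γ)| :=
      (abs_sum_le_sum_abs _ _).trans (sum_le_sum hterm)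
    _ ≤ ∑ β, M * min |a β| |a (β + γ)| :=
      sum_le_sum_of_subset_of_nonneg (subset_univ S) fun β _ _ =>
        mul_nonneg hpos.le (le_min (abs_nonneg _) (abs_nonneg _))
    _ = (∑ β, min |a β| |a (β + γ)|) * M := by rw [← mul_sum, mul_comm]
  exact le_of_mul_le_mul_right hmain hpos

lemma exists_two_div_le_sum_min (hG : ∀ x : G, x + x = 0) {a : G → ℝ}
    (hsq : ∑ β, a β ^ 2 = 1) (hcorr : ∀ γ ≠ 0, ∑ β, a β * a (β + γ) = 0)
    (habs : 1 < ∑ β, |a β|) :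
    ∃ γ ≠ 0, 2 / ∑ β, |a β| ≤ ∑ β, min |a β| |a (β + γ)| := by
  obtain ⟨α₁, hα₁⟩ := Finite.exists_max (|a ·|)
  obtain ⟨β₀, hβ₀, hβ₀ne⟩ := exists_ne_apply_ne_zero hsq habs α₁
  obtain ⟨α₂, hα₂mem, hα₂⟩ := exists_max_image (univ.erase α₁) (|a ·|)
    ⟨β₀, mem_erase.2 ⟨hβ₀, mem_univ _⟩⟩
  have hne : α₁ ≠ α₂ := (ne_of_mem_erase hα₂mem).symm
  have hγ : α₁ + α₂ ≠ 0 := fun h =>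
    hne ((add_eq_zero_iff_eq_neg.1 h).trans (neg_eq_of_add_eq_zero_left (hG α₂)))
  refine ⟨α₁ + α₂, hγ, le_trans ?_ (two_mul_abs_le_sum_min hG hne (hcorr _ hγ)
    ((abs_pos.2 hβ₀ne).trans_le (hα₂ β₀ (mem_erase.2 ⟨hβ₀, mem_univ _⟩)))
    fun β hβ => hα₂ β (mem_erase.2 ⟨hβ, mem_univ _⟩))⟩
  have hA : 0 < ∑ β, |a β| := one_pos.trans habs
  rw [div_le_iff₀ hA]
  linarith [sum_sq_le_mul_sum_abs a hα₁]

end FiniteGroup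

section BooleanCube

variable {n : ℕ}

lemma cube_add_self (x : Fin n → ZMod 2) : x + x = 0 :=
  funext fun i => CharTwo.add_self_eq_zero (x i)

lemma chi_eq_ite_dotProduct (α x : Fin n → ZMod 2) : chi α x = if α ⬝ᵥ x = 0 then 1 else -1 :=
  rfl

lemma chi_comm (α x : Fin n → ZMod 2) : chi α x = chi x α := by
  rw [chi_eq_ite_dotProduct, chi_eq_ite_dotProduct, dotProduct_comm]

lemma chi_add_right (α x y : Fin n → ZMod 2) : chi α (x + y) = chi α x * chi α y := by
  simp only [chi_eq_ite_dotProduct, dotProduct_add]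
  have hbit : ∀ u : ZMod 2, u = 0 ∨ u = 1 := by decide
  rcases hbit (α ⬝ᵥ x) with hx | hx <;> rcases hbit (α ⬝ᵥ y) with hy | hy <;>
    simp [hx, hy, show (1 + 1 : ZMod 2) = 0 from rfl]

lemma chi_add_left (α β x : Fin n → ZMod 2) : chi (α + β) x = chi α x * chi β x := by
  rw [chi_comm, chi_add_right, chi_comm x, chi_comm x]

lemma chi_zero_left (x : Fin n → ZMod 2) : chi 0 x = 1 := by
  simp [chi_eq_ite_dotProduct]

lemma sum_chi (γ : Fin n → ZMod 2) :
    ∑ x, chi γ x = if γ = 0 then (2 ^ n : ℝ) else 0 := by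
  split_ifs with hγ
  · simp [hγ, chi_zero_left]
  obtain ⟨i, hi⟩ : ∃ i, γ i ≠ 0 := Function.ne_iff.1 hγ
  have hflip : chi γ (Pi.single i 1) = -1 := by
    simp [chi_eq_ite_dotProduct, dotProduct_single, hi]
  have hneg : ∑ x, chi γ x = -∑ x, chi γ x := calc
    ∑ x, chi γ x = ∑ x, chi γ (Pi.single i 1 + x) :=
      (Equiv.sum_comp (Equiv.addLeft (Pi.single i 1)) _).symm
    _ = -∑ x, chi γ x := by simp [chi_add_right, hflip]
  linarith

lemma sum_chi_mul_chi (x y : Fin n → ZMod 2) :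
    ∑ β, chi β x * chi β y = if x = y then (2 ^ n : ℝ) else 0 := by
  simp_rw [← chi_add_right, chi_comm _ (x + y), sum_chi, add_eq_zero_iff_eq_neg,
    neg_eq_of_add_eq_zero_left (cube_add_self y)]

lemma fhat_one (γ : Fin n → ZMod 2) :
    fhat 1 γ = if γ = 0 then 1 else 0 := by
  simp only [fhat, Pi.one_apply, one_mul, sum_chi]
  split_ifs <;> simp

lemma sum_fhat_mul_fhat_add (f g : (Fin n → ZMod 2) → ℝ) (γ : Fin n → ZMod 2) :
    ∑ β, fhat f β * fhat g (β + γ) = fhat (f * g) γ := by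
  calc ∑ β, fhat f β * fhat g (β + γ)
      = (2 ^ n : ℝ)⁻¹ * (2 ^ n : ℝ)⁻¹ *
          ∑ x, ∑ y, f x * g y * chi γ y * ∑ β, chi β x * chi β y := by
        simp only [fhat, mul_sum, sum_mul]
        rw [sum_comm_cycle]
        refine sum_congr rfl fun x _ => ?_
        rw [sum_comm]
        refine sum_congr rfl fun y _ => sum_congr rfl fun β _ => ?_
        rw [chi_add_left]
        ring
    _ = fhat (f * g) γ := by
        simp only [sum_chi_mul_chi, mul_ite, mul_zero, sum_ite_eq, mem_univ, if_true, fhat,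
          Pi.mul_apply, mul_sum]
        refine sum_congr rfl fun x _ => ?_
        field_simp

end BooleanCube

/-- **Corollary 3.4**: if `f` is Boolean with spectral norm `A > 1`, then some
restriction to an affine hyperplane `{x : χ_γ(x) = b}` (with `γ ≠ 0`,
`b ∈ {−1,1}`) has spectral norm at most `A − 1/A`. Here
`(1/2) ∑_β |f̂(β) + b f̂(β+γ)|` is the spectral norm of that restriction. -/
theorem exists_norm_reducing_restriction {n : ℕ}
    (f : (Fin n → ZMod 2) → ℝ) (hf : ∀ x, f x = 1 ∨ f x = -1)
    (A : ℝ) (hA : ∑ α : Fin n → ZMod 2, |fhat f α| = A) (hA1 : 1 < A) :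
    ∃ γ : Fin n → ZMod 2, γ ≠ 0 ∧ ∃ b : ℝ, (b = 1 ∨ b = -1) ∧
      (1 / 2) * (∑ β : Fin n → ZMod 2, |fhat f β + b * fhat f (β + γ)|) ≤ A - 1 / A := by
  have hsq : f * f = 1 := funext fun x => by rcases hf x with h | h <;> simp [h]
  have hcorr (γ) : ∑ β, fhat f β * fhat f (β + γ) = if γ = 0 then 1 else 0 := by
    rw [sum_fhat_mul_fhat_add, hsq, fhat_one]
  obtain ⟨γ, hγ, hmin⟩ := exists_two_div_le_sum_min cube_add_self
    (by simpa [sq] using hcorr 0) (fun γ hγ => by simpa [hγ] using hcorr γ) (hA ▸ hA1)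
  have hsplit := sum_abs_add_add_sum_abs_sub (fhat f) γ
  rw [hA] at hmin hsplit
  have h2A : 2 / A = 2 * (1 / A) := by ring
  refine ⟨γ, hγ, ?_⟩
  by_cases hplus : ∑ β, |fhat f β + fhat f (β + γ)| ≤ 2 * A - 2 / A
  · exact ⟨1, Or.inl rfl, by simp only [one_mul]; linarith⟩
  · exact ⟨-1, Or.inr rfl, by simp only [neg_one_mul, ← sub_eq_add_neg]; linarith⟩
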